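/- Liouville-type theorem for free entire functions: Let S_1,…,S_n be isometries with pairwise orthogonal ranges and vacuum vector ξ on a complex Hilbert space E. Let a : F_n^+ → ℂ be entire, i.e. limsup_{k→∞}(∑_{|α|=k}|a_α|²)^{1/(2k)} = 0, so that f(ρS) := ∑_{k=0}^∞ ρ^k ∑_{|α|=k} a_α S_α converges in operator norm for every ρ ≥ 0. Let m ≥ 0. Then a_α = 0 for all words α with |α| > m (i.e., f is a polynomial of degree at most m) if and only if there exist constants M > 0 and C > 1 such that ‖f(ρS)‖ ≤ M ρ^m for all ρ ≥ C. -/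

import Mathlib

open Filter MeasureTheory
open scoped ENNReal

variable {n : ℕ}

/-- The operator `X_α` associated to a word `α` in the free monoid `F_n^+`
(words are encoded as lists over `Fin n`). -/
noncomputable def wordProd {H : Type*} [NormedAddCommGroup H] [NormedSpace ℂ H]
    (X : Fin n → H →L[ℂ] H) (α : List (Fin n)) : H →L[ℂ] H :=
  (α.map X).prod

/-- The level-`k` piece `∑_{|α|=k} a_α X_α` of a free power series (words of length `k`
are encoded as functions `Fin k → Fin n`). -/
noncomputable def lvlOp {H : Type*} [NormedAddCommGroup H] [NormedSpace ℂ H]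
    (a : List (Fin n) → ℂ) (X : Fin n → H →L[ℂ] H) (k : ℕ) : H →L[ℂ] H :=
  ∑ w : Fin k → Fin n, a (List.ofFn w) • wordProd X (List.ofFn w)

/-- `(∑_{|α|=k} |a_α|²)^{1/2}`. -/
noncomputable def lvlCoef (a : List (Fin n) → ℂ) (k : ℕ) : ℝ :=
  Real.sqrt (∑ w : Fin k → Fin n, ‖a (List.ofFn w)‖ ^ 2)

/-- `1/R = limsup_k (∑_{|α|=k} |a_α|²)^{1/(2k)}`, as an extended nonnegative real;
the radius of convergence is `(radiusInv a)⁻¹ ∈ [0,∞]`. -/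
noncomputable def radiusInv (a : List (Fin n) → ℂ) : ℝ≥0∞ :=
  Filter.limsup (fun k : ℕ => ENNReal.ofReal (lvlCoef a k ^ (1 / (2 * (k : ℝ))))) Filter.atTop

/-- The row norm `‖X_1X_1^* + ⋯ + X_nX_n^*‖^{1/2}`. -/
noncomputable def rowNorm {H : Type*} [NormedAddCommGroup H] [InnerProductSpace ℂ H]
    [CompleteSpace H] (X : Fin n → H →L[ℂ] H) : ℝ :=
  Real.sqrt ‖∑ i, X i ∘L ContinuousLinearMap.adjoint (X i)‖

/-- The joint spectral radius `limsup_k ‖∑_{|α|=k} X_α X_α^*‖^{1/(2k)}`,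
as an extended nonnegative real. -/
noncomputable def jsr {H : Type*} [NormedAddCommGroup H] [InnerProductSpace ℂ H]
    [CompleteSpace H] (X : Fin n → H →L[ℂ] H) : ℝ≥0∞ :=
  Filter.limsup (fun k : ℕ => ENNReal.ofReal
    (‖∑ w : Fin k → Fin n, wordProd X (List.ofFn w) ∘L
        ContinuousLinearMap.adjoint (wordProd X (List.ofFn w))‖ ^ (1 / (2 * (k : ℝ))))) Filter.atTop

section Aux

variable {E : Type*} [NormedAddCommGroup E] [InnerProductSpace ℂ E] [CompleteSpace E]

local notation "⟪" x ", " y "⟫" => @inner ℂ _ _ x y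

lemma wordProd_nil (X : Fin n → E →L[ℂ] E) : wordProd X ([] : List (Fin n)) = 1 := rfl

lemma wordProd_cons (X : Fin n → E →L[ℂ] E) (i : Fin n) (l : List (Fin n)) :
    wordProd X (i :: l) = X i ∘L wordProd X l := by
  simp [wordProd]
  rfl

lemma norm_wordProd_le (X : Fin n → E →L[ℂ] E) (hX : ∀ i, ‖X i‖ ≤ 1) (l : List (Fin n)) :
    ‖wordProd X l‖ ≤ 1 := by
  induction l with
  | nil =>
      rw [wordProd_nil, ContinuousLinearMap.one_def]
      exact ContinuousLinearMap.norm_id_le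
  | cons i l ih =>
      rw [wordProd_cons]
      calc ‖X i ∘L wordProd X l‖ ≤ ‖X i‖ * ‖wordProd X l‖ := ContinuousLinearMap.opNorm_comp_le _ _
      _ ≤ 1 * 1 := by
        apply mul_le_mul (hX i) ih (norm_nonneg _) (le_trans (norm_nonneg _) (hX i))
      _ = 1 := by ring

variable (S : Fin n → E →L[ℂ] E)
  (hS : ∀ i j, ContinuousLinearMap.adjoint (S i) ∘L S j = if i = j then 1 else 0)
  (ξ : E) (hξ : ‖ξ‖ = 1) (hvac : ∀ i, ContinuousLinearMap.adjoint (S i) ξ = 0)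

include hS in
lemma norm_S_le (i : Fin n) : ‖S i‖ ≤ 1 := by
  refine ContinuousLinearMap.opNorm_le_bound _ zero_le_one fun x => ?_
  have hii := hS i i
  rw [if_pos rfl] at hii
  have h1 : ⟪S i x, S i x⟫ = ⟪x, x⟫ := by
    rw [← ContinuousLinearMap.adjoint_inner_left]
    have := congrArg (fun T : E →L[ℂ] E => T x) hii
    simp only [ContinuousLinearMap.coe_comp', Function.comp_apply,
      ContinuousLinearMap.one_apply] at this
    rw [this]
  have h2 : ‖S i x‖ ^ 2 = ‖x‖ ^ 2 := by
    rw [inner_self_eq_norm_sq_to_K, inner_self_eq_norm_sq_to_K] at h1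
    exact_mod_cast h1
  have : ‖S i x‖ = ‖x‖ := by
    nlinarith [norm_nonneg (S i x), norm_nonneg x]
  rw [this, one_mul]

include hS hξ hvac in
lemma inner_wordProd (α β : List (Fin n)) :
    ⟪wordProd S α ξ, wordProd S β ξ⟫ = if α = β then 1 else 0 := by
  induction α generalizing β with
  | nil =>
      cases β with
      | nil => simp [wordProd_nil, inner_self_eq_norm_sq_to_K, hξ]
      | cons j β' =>
          rw [wordProd_nil, wordProd_cons]
          simp only [ContinuousLinearMap.one_apply, ContinuousLinearMap.coe_comp',
            Function.comp_apply]
          rw [← ContinuousLinearMap.adjoint_inner_left, hvac, inner_zero_left]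
          simp
  | cons i α' ih =>
      cases β with
      | nil =>
          rw [wordProd_nil, wordProd_cons]
          simp only [ContinuousLinearMap.one_apply, ContinuousLinearMap.coe_comp',
            Function.comp_apply]
          rw [← ContinuousLinearMap.adjoint_inner_right, hvac, inner_zero_right]
          simp
      | cons j β' =>
          rw [wordProd_cons, wordProd_cons]
          simp only [ContinuousLinearMap.coe_comp', Function.comp_apply]
          rw [← ContinuousLinearMap.adjoint_inner_right]
          have hcomp : (ContinuousLinearMap.adjoint (S i)) ((S j) (wordProd S β' ξ)) =
              if i = j then wordProd S β' ξ else 0 := by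
            have := congrArg (fun T : E →L[ℂ] E => T (wordProd S β' ξ)) (hS i j)
            simp only [ContinuousLinearMap.coe_comp', Function.comp_apply] at this
            rw [this]
            by_cases hij : i = j <;> simp [hij]
          rw [hcomp]
          by_cases hij : i = j
          · subst hij
            rw [if_pos rfl, ih β']
            simp [List.cons.injEq]
          · rw [if_neg hij, inner_zero_right, if_neg (by simp [List.cons.injEq, hij])]


include hS hξ hvac in
lemma norm_wordProd_xi (α : List (Fin n)) : ‖wordProd S α ξ‖ = 1 := by
  have h := inner_wordProd S hS ξ hξ hvac α α
  rw [if_pos rfl, inner_self_eq_norm_sq_to_K] at h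
  have h2 : ((‖wordProd S α ξ‖ ^ 2 : ℝ) : ℂ) = ((1 : ℝ) : ℂ) := by push_cast; exact h
  have h3 := Complex.ofReal_injective h2
  nlinarith [norm_nonneg (wordProd S α ξ), h3]

include hS hξ hvac in
lemma inner_lvlOp (a : List (Fin n) → ℂ) (α : List (Fin n)) (k : ℕ) :
    ⟪wordProd S α ξ, lvlOp a S k ξ⟫ = if α.length = k then a α else 0 := by
  rw [lvlOp, ContinuousLinearMap.sum_apply, inner_sum]
  simp only [ContinuousLinearMap.smul_apply, inner_smul_right]
  have key : ∀ w : Fin k → Fin n,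
      ⟪wordProd S α ξ, wordProd S (List.ofFn w) ξ⟫ = if α = List.ofFn w then 1 else 0 :=
    fun w => inner_wordProd S hS ξ hξ hvac α (List.ofFn w)
  by_cases h : α.length = k
  · subst h
    set w0 : Fin α.length → Fin n := α.get with hw0
    have hofn : List.ofFn w0 = α := List.ofFn_get α
    rw [if_pos rfl, Finset.sum_eq_single w0]
    · rw [key, if_pos hofn.symm, mul_one, hofn]
    · intro b _ hb
      rw [key, if_neg, mul_zero]
      intro hab
      exact hb (List.ofFn_injective (hofn.trans hab).symm)
    · intro habs; exact absurd (Finset.mem_univ w0) habs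
  · rw [if_neg h]
    apply Finset.sum_eq_zero
    intro w _
    rw [key, if_neg, mul_zero]
    intro hab
    exact h (by rw [hab, List.length_ofFn])

include hS in
lemma norm_lvlOp_le (a : List (Fin n) → ℂ) (k : ℕ) :
    ‖lvlOp a S k‖ ≤ ∑ w : Fin k → Fin n, ‖a (List.ofFn w)‖ := by
  refine (norm_sum_le _ _).trans (Finset.sum_le_sum fun w _ => ?_)
  rw [norm_smul]
  calc ‖a (List.ofFn w)‖ * ‖wordProd S (List.ofFn w)‖ ≤ ‖a (List.ofFn w)‖ * 1 := by
        exact mul_le_mul_of_nonneg_left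
          (norm_wordProd_le S (fun i => norm_S_le S hS i) _) (norm_nonneg _)
  _ = _ := mul_one _

include hS in
lemma summable_series (hn : 0 < n) (a : List (Fin n) → ℂ) (hent : radiusInv a = 0)
    (ρ : ℝ) (hρ : 0 ≤ ρ) :
    Summable (fun k : ℕ => ((ρ : ℂ) ^ k) • lvlOp a S k) := by
  set ε : ℝ := min 1 (1 / (2 * n * (ρ + 1))) with hε
  have hn1 : (1 : ℝ) ≤ n := by exact_mod_cast hn
  have hεpos : 0 < ε := by
    apply lt_min one_pos
    positivity
  have hεle : ρ * n * ε ^ 2 ≤ 1 / 2 := by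
    have h1 : ε ≤ 1 := min_le_left _ _
    have h2 : ε ≤ 1 / (2 * n * (ρ + 1)) := min_le_right _ _
    have h3 : ε * (2 * n * (ρ + 1)) ≤ 1 := by
      rw [← le_div_iff₀ (by positivity)]; exact h2
    nlinarith [hεpos.le, sq_nonneg ε]
  have hev : ∀ᶠ k : ℕ in atTop, lvlCoef a k ^ (1 / (2 * (k : ℝ))) < ε := by
    have hlt : radiusInv a < ENNReal.ofReal ε := by
      rw [hent]; exact ENNReal.ofReal_pos.mpr hεpos
    have := Filter.eventually_lt_of_limsup_lt hlt
    filter_upwards [this] with k hk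
    rw [ENNReal.ofReal_lt_ofReal_iff hεpos] at hk
    exact hk
  have hbound : ∀ᶠ k : ℕ in atTop, ‖((ρ : ℂ) ^ k) • lvlOp a S k‖ ≤ (1 / 2) ^ k := by
    filter_upwards [hev, Filter.eventually_ge_atTop 1] with k hk hk1
    have hx0 : 0 ≤ lvlCoef a k := Real.sqrt_nonneg _
    -- lvlCoef a k ≤ ε ^ (2 * k)
    have hstep : lvlCoef a k ≤ ε ^ (2 * k) := by
      have h1 : (lvlCoef a k ^ (1 / (2 * (k : ℝ)))) ^ (2 * k) ≤ ε ^ (2 * k) :=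
        pow_le_pow_left₀ (Real.rpow_nonneg hx0 _) hk.le _
      have h2 : (lvlCoef a k ^ (1 / (2 * (k : ℝ)))) ^ (2 * k) = lvlCoef a k := by
        rw [← Real.rpow_natCast (lvlCoef a k ^ (1 / (2 * (k : ℝ)))) (2 * k),
          ← Real.rpow_mul hx0]
        have : 1 / (2 * (k : ℝ)) * ((2 * k : ℕ) : ℝ) = 1 := by
          have hk0 : (k : ℝ) ≠ 0 := by positivity
          push_cast
          field_simp
        rw [this, Real.rpow_one]
      rwa [h2] at h1
    -- each coefficient ≤ lvlCoef
    have hcoef : ∀ w : Fin k → Fin n, ‖a (List.ofFn w)‖ ≤ lvlCoef a k := by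
      intro w
      rw [lvlCoef, ← Real.sqrt_sq (norm_nonneg (a (List.ofFn w)))]
      apply Real.sqrt_le_sqrt
      exact Finset.single_le_sum (f := fun w : Fin k → Fin n => ‖a (List.ofFn w)‖ ^ 2)
        (fun i _ => sq_nonneg _) (Finset.mem_univ w)
    have hcard : ((Fintype.card (Fin k → Fin n) : ℕ) : ℝ) = (n : ℝ) ^ k := by
      simp [Fintype.card_fun]
    have hsum : ∑ w : Fin k → Fin n, ‖a (List.ofFn w)‖ ≤ (n : ℝ) ^ k * lvlCoef a k := by
      have h := Finset.sum_le_card_nsmul Finset.univ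
        (fun w : Fin k → Fin n => ‖a (List.ofFn w)‖) (lvlCoef a k) (fun w _ => hcoef w)
      simp only [Finset.card_univ, nsmul_eq_mul] at h
      rwa [hcard] at h
    have hnorm : ‖((ρ : ℂ) ^ k) • lvlOp a S k‖ = ρ ^ k * ‖lvlOp a S k‖ := by
      rw [norm_smul, norm_pow, Complex.norm_real, Real.norm_of_nonneg hρ]
    rw [hnorm]
    calc ρ ^ k * ‖lvlOp a S k‖ ≤ ρ ^ k * ((n : ℝ) ^ k * lvlCoef a k) := by
          apply mul_le_mul_of_nonneg_left _ (pow_nonneg hρ k)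
          exact (norm_lvlOp_le S hS a k).trans hsum
      _ ≤ ρ ^ k * ((n : ℝ) ^ k * ε ^ (2 * k)) := by
          apply mul_le_mul_of_nonneg_left _ (pow_nonneg hρ k)
          exact mul_le_mul_of_nonneg_left hstep (by positivity)
      _ = (ρ * n * ε ^ 2) ^ k := by rw [pow_mul]; ring
      _ ≤ (1 / 2) ^ k := pow_le_pow_left₀ (by positivity) hεle k
  apply Summable.of_norm_bounded_eventually_nat (g := fun k => (1 / 2 : ℝ) ^ k)
  · exact summable_geometric_of_lt_one (by norm_num) (by norm_num)
  · exact hbound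

end Aux

/-- **Liouville-type theorem for free entire functions.** Let `S_1,…,S_n` be isometries
with pairwise orthogonal ranges and vacuum vector `ξ`, and let `a` be entire
(`limsup = 0`, so `f(ρS)` converges for every `ρ ≥ 0`). Then `f` is a polynomial of
degree `≤ m` (i.e. `a_α = 0` for `|α| > m`) iff there are `M > 0` and `C > 1` with
`‖f(ρS)‖ ≤ M ρ^m` for all `ρ ≥ C`. -/
theorem stmt_11 {n : ℕ} (hn : 0 < n) (a : List (Fin n) → ℂ)
    {E : Type*} [NormedAddCommGroup E] [InnerProductSpace ℂ E] [CompleteSpace E]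
    (S : Fin n → E →L[ℂ] E)
    (hS : ∀ i j, ContinuousLinearMap.adjoint (S i) ∘L S j = if i = j then 1 else 0)
    (ξ : E) (hξ : ‖ξ‖ = 1) (hvac : ∀ i, ContinuousLinearMap.adjoint (S i) ξ = 0)
    (hent : radiusInv a = 0) (m : ℕ) :
    (∀ α : List (Fin n), m < α.length → a α = 0) ↔
      ∃ M : ℝ, 0 < M ∧ ∃ C : ℝ, 1 < C ∧ ∀ ρ : ℝ, C ≤ ρ →
        ‖∑' k : ℕ, ((ρ : ℂ) ^ k) • lvlOp a S k‖ ≤ M * ρ ^ m := by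
  constructor
  · intro h
    refine ⟨(∑ k ∈ Finset.range (m + 1), ‖lvlOp a S k‖) + 1,
      by positivity, 2, one_lt_two, fun ρ hρ => ?_⟩
    have hρ1 : (1 : ℝ) ≤ ρ := by linarith
    have hρ0 : (0 : ℝ) ≤ ρ := by linarith
    have hzero : ∀ k ∉ Finset.range (m + 1), ((ρ : ℂ) ^ k) • lvlOp a S k = 0 := by
      intro k hk
      have hk' : m < k := by
        rw [Finset.mem_range, Nat.lt_succ_iff, not_le] at hk
        exact hk
      have hl : lvlOp a S k = 0 := by
        rw [lvlOp]
        apply Finset.sum_eq_zero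
        intro w _
        rw [h (List.ofFn w) (by rw [List.length_ofFn]; exact hk'), zero_smul]
      rw [hl, smul_zero]
    rw [tsum_eq_sum hzero]
    have hXnn : (0 : ℝ) ≤ ∑ k ∈ Finset.range (m + 1), ‖lvlOp a S k‖ :=
      Finset.sum_nonneg fun k _ => norm_nonneg _
    have hρm : (0 : ℝ) ≤ ρ ^ m := by positivity
    calc ‖∑ k ∈ Finset.range (m + 1), ((ρ : ℂ) ^ k) • lvlOp a S k‖
        ≤ ∑ k ∈ Finset.range (m + 1), ‖((ρ : ℂ) ^ k) • lvlOp a S k‖ := norm_sum_le _ _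
      _ ≤ ∑ k ∈ Finset.range (m + 1), ρ ^ m * ‖lvlOp a S k‖ := by
          apply Finset.sum_le_sum
          intro k hk
          rw [norm_smul, norm_pow, Complex.norm_real, Real.norm_of_nonneg hρ0]
          exact mul_le_mul_of_nonneg_right
            (pow_le_pow_right₀ hρ1 (Nat.lt_succ_iff.mp (Finset.mem_range.mp hk)))
            (norm_nonneg _)
      _ = ρ ^ m * ∑ k ∈ Finset.range (m + 1), ‖lvlOp a S k‖ := by rw [← Finset.mul_sum]
      _ ≤ ((∑ k ∈ Finset.range (m + 1), ‖lvlOp a S k‖) + 1) * ρ ^ m := by nlinarith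
  · rintro ⟨M, hM, C, hC, hbound⟩ α hα
    by_contra hne
    have hapos : 0 < ‖a α‖ := norm_pos_iff.mpr hne
    set ρ : ℝ := max C (M / ‖a α‖ + 1) with hρdef
    have hρC : C ≤ ρ := le_max_left _ _
    have hρ1 : (1 : ℝ) ≤ ρ := le_trans hC.le hρC
    have hρ0 : (0 : ℝ) ≤ ρ := by linarith
    have hρM : M / ‖a α‖ + 1 ≤ ρ := le_max_right _ _
    have hsummable := summable_series S hS hn a hent ρ hρ0
    set T : E →L[ℂ] E := ∑' k : ℕ, ((ρ : ℂ) ^ k) • lvlOp a S k with hT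
    set u : E := wordProd S α ξ with hu
    have hTξ : T ξ = ∑' k : ℕ, (((ρ : ℂ) ^ k) • lvlOp a S k) ξ :=
      (ContinuousLinearMap.apply ℂ E ξ).map_tsum hsummable
    have hsum2 : Summable (fun k : ℕ => (((ρ : ℂ) ^ k) • lvlOp a S k) ξ) :=
      hsummable.map (ContinuousLinearMap.apply ℂ E ξ)
        (ContinuousLinearMap.apply ℂ E ξ).continuous
    have hterm : ∀ k : ℕ, (innerSL ℂ u) ((((ρ : ℂ) ^ k) • lvlOp a S k) ξ) =
        (ρ : ℂ) ^ k * (if α.length = k then a α else 0) := by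
      intro k
      rw [ContinuousLinearMap.smul_apply, innerSL_apply_apply, inner_smul_right,
        inner_lvlOp S hS ξ hξ hvac a α k]
    have hfinal : (inner ℂ u (T ξ) : ℂ) = (ρ : ℂ) ^ α.length * a α := by
      rw [hTξ]
      calc (inner ℂ u (∑' k : ℕ, (((ρ : ℂ) ^ k) • lvlOp a S k) ξ) : ℂ)
          = ∑' k : ℕ, (innerSL ℂ u) ((((ρ : ℂ) ^ k) • lvlOp a S k) ξ) :=
            (innerSL ℂ u).map_tsum hsum2
        _ = ∑' k : ℕ, (ρ : ℂ) ^ k * (if α.length = k then a α else 0) := tsum_congr hterm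
        _ = (ρ : ℂ) ^ α.length * a α := by
            rw [tsum_eq_single α.length]
            · rw [if_pos rfl]
            · intro b hb
              rw [if_neg (fun hh => hb hh.symm), mul_zero]
    have h5 : ‖(ρ : ℂ) ^ α.length * a α‖ ≤ M * ρ ^ m := by
      rw [← hfinal]
      calc ‖(inner ℂ u (T ξ) : ℂ)‖ ≤ ‖u‖ * ‖T ξ‖ := norm_inner_le_norm _ _
        _ = ‖T ξ‖ := by rw [hu, norm_wordProd_xi S hS ξ hξ hvac α, one_mul]
        _ ≤ ‖T‖ * ‖ξ‖ := T.le_opNorm ξ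
        _ = ‖T‖ := by rw [hξ, mul_one]
        _ ≤ M * ρ ^ m := hbound ρ hρC
    have h6 : ρ ^ α.length * ‖a α‖ ≤ M * ρ ^ m := by
      have he : ‖(ρ : ℂ) ^ α.length * a α‖ = ρ ^ α.length * ‖a α‖ := by
        rw [norm_mul, norm_pow, Complex.norm_real, Real.norm_of_nonneg hρ0]
      rwa [he] at h5
    have h7 : ρ ^ (m + 1) ≤ ρ ^ α.length := pow_le_pow_right₀ hρ1 hα
    have hρmpos : (0 : ℝ) < ρ ^ m := by positivity
    have h8 : ρ ^ m * (ρ * ‖a α‖) ≤ ρ ^ m * M := by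
      have e2 : ρ ^ (m + 1) * ‖a α‖ ≤ ρ ^ α.length * ‖a α‖ :=
        mul_le_mul_of_nonneg_right h7 (norm_nonneg _)
      have e1 : ρ ^ m * (ρ * ‖a α‖) = ρ ^ (m + 1) * ‖a α‖ := by ring
      linarith
    have h9 : ρ * ‖a α‖ ≤ M := le_of_mul_le_mul_left h8 hρmpos
    have h10 : M / ‖a α‖ * ‖a α‖ = M := div_mul_cancel₀ M (ne_of_gt hapos)
    nlinarith [mul_le_mul_of_nonneg_right hρM (le_of_lt hapos)]
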